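/- (Corollary 5.6, first part: a posteriori residual-based error bound.) Let x be a space-time function with r̄(x) = 0. Assume: (i) there exists s_A > 0 with ‖A_LM z‖₂ ≥ s_A ‖z‖₂ for all z ∈ ℝ^{N·N_t}; (ii) Δt · L_f · σ_max(B_LM) < s_A, and set K_r := s_A − Δt·L_f·σ_max(B_LM); and (iii) there exists P > 0 with ‖W̄ r̄(w)‖₂ ≥ P · ‖r̄(w)‖₂ for all w ∈ S. Then for every w ∈ S, max_{n ∈ Fin N_t} ‖x(n) − w(n)‖₂ ≤ ‖vec(x) − vec(w)‖₂ ≤ (1/(P · K_r)) · ‖W̄ r̄(w)‖₂. -/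
import Mathlib


noncomputable section

/-- A space-time function. -/
abbrev SpaceTime (N Nt : ℕ) := Fin Nt → EuclideanSpace ℝ (Fin N)

/-- Vectorization of a space-time function: stacks the blocks `w 0, …, w (Nt-1)`
into a single Euclidean vector of dimension `N * Nt`. -/
def vec {N Nt : ℕ} (w : SpaceTime N Nt) : EuclideanSpace ℝ (Fin Nt × Fin N) :=
  (WithLp.equiv 2 _).symm (fun p => w p.1 p.2)

/-- The largest singular value (ℓ² operator norm) of a real matrix. -/
def sigmaMax {m n : Type*} [Fintype m] [Fintype n] [DecidableEq n] (M : Matrix m n ℝ) : ℝ :=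
  ‖LinearMap.toContinuousLinearMap (Matrix.toEuclideanLin M)‖

/-- Matrix–vector multiplication as a map between Euclidean spaces. -/
def mulVecE {m n : Type*} [Fintype m] [Fintype n] [DecidableEq n] (M : Matrix m n ℝ)
    (v : EuclideanSpace ℝ n) : EuclideanSpace ℝ m :=
  Matrix.toEuclideanLin M v

/-- The stacked velocity `F̄(w)`: vectorization of `n ↦ f (w n, t n)`. -/
def Fbar {N Nt : ℕ} (f : EuclideanSpace ℝ (Fin N) × ℝ → EuclideanSpace ℝ (Fin N))
    (t : Fin Nt → ℝ) (w : SpaceTime N Nt) : EuclideanSpace ℝ (Fin Nt × Fin N) :=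
  vec (fun n => f (w n, t n))

/-- The space-time linear multistep residual `r̄(w) = A_LM vec(w) − Δt B_LM F̄(w) + b`. -/
def resid {N Nt : ℕ} (A_LM B_LM : Matrix (Fin Nt × Fin N) (Fin Nt × Fin N) ℝ)
    (b : EuclideanSpace ℝ (Fin Nt × Fin N)) (Δt : ℝ)
    (f : EuclideanSpace ℝ (Fin N) × ℝ → EuclideanSpace ℝ (Fin N))
    (t : Fin Nt → ℝ) (w : SpaceTime N Nt) : EuclideanSpace ℝ (Fin Nt × Fin N) :=
  mulVecE A_LM (vec w) - Δt • mulVecE B_LM (Fbar f t w) + b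


lemma vec_apply' {N Nt : ℕ} (w : SpaceTime N Nt) (p : Fin Nt × Fin N) :
    vec w p = w p.1 p.2 := rfl

lemma norm_vec_sq' {N Nt : ℕ} (w : SpaceTime N Nt) :
    ‖vec w‖ ^ 2 = ∑ n : Fin Nt, ‖w n‖ ^ 2 := by
  have h1 : ‖vec w‖ ^ 2 = ∑ p : Fin Nt × Fin N, ‖vec w p‖ ^ 2 := by
    rw [EuclideanSpace.norm_eq, Real.sq_sqrt (by positivity)]
  have h2 : ∀ n : Fin Nt, ‖w n‖ ^ 2 = ∑ i, ‖w n i‖ ^ 2 := fun n => by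
    rw [EuclideanSpace.norm_eq, Real.sq_sqrt (by positivity)]
  rw [h1, Fintype.sum_prod_type]
  simp [h2, vec_apply']

lemma norm_comp_le' {N Nt : ℕ} (w : SpaceTime N Nt) (n : Fin Nt) :
    ‖w n‖ ≤ ‖vec w‖ := by
  rw [← pow_le_pow_iff_left₀ (norm_nonneg _) (norm_nonneg _) two_ne_zero,
    norm_vec_sq']
  exact Finset.single_le_sum (f := fun i => ‖w i‖ ^ 2) (fun i _ => by positivity)
    (Finset.mem_univ n)

set_option maxHeartbeats 1000000 in
/-- Corollary 5.6, first part: a posteriori residual-based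
error bound for any element of the space-time trial subspace. -/
theorem aposteriori_bound {N Nt zb : ℕ} (hN : 1 ≤ N) (hNt : 1 ≤ Nt)
    (t : Fin Nt → ℝ) (Δt : ℝ) (hΔt : 0 < Δt)
    (A_LM B_LM : Matrix (Fin Nt × Fin N) (Fin Nt × Fin N) ℝ)
    (b : EuclideanSpace ℝ (Fin Nt × Fin N))
    (f : EuclideanSpace ℝ (Fin N) × ℝ → EuclideanSpace ℝ (Fin N))
    (L_f : ℝ) (hLf : 0 ≤ L_f)
    (hlip : ∀ (u v : EuclideanSpace ℝ (Fin N)) (n : Fin Nt),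
      ‖f (u, t n) - f (v, t n)‖ ≤ L_f * ‖u - v‖)
    (W : Matrix (Fin zb) (Fin Nt × Fin N) ℝ)
    (S : Set (SpaceTime N Nt))
    (x : SpaceTime N Nt) (hx : resid A_LM B_LM b Δt f t x = 0)
    (sA : ℝ) (hsA : 0 < sA)
    (hAlow : ∀ z : EuclideanSpace ℝ (Fin Nt × Fin N), sA * ‖z‖ ≤ ‖mulVecE A_LM z‖)
    (hdt : Δt * L_f * sigmaMax B_LM < sA)
    (P : ℝ) (hP : 0 < P)
    (hW : ∀ w ∈ S, P * ‖resid A_LM B_LM b Δt f t w‖ ≤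
      ‖mulVecE W (resid A_LM B_LM b Δt f t w)‖) :
    ∀ w ∈ S, (⨆ n : Fin Nt, ‖x n - w n‖) ≤ ‖vec x - vec w‖ ∧
      ‖vec x - vec w‖ ≤ (1 / (P * (sA - Δt * L_f * sigmaMax B_LM))) *
        ‖mulVecE W (resid A_LM B_LM b Δt f t w)‖ := by
  intro w hw
  have hsub : ∀ u v : SpaceTime N Nt, vec u - vec v = vec (fun n => u n - v n) := fun _ _ => rfl
  have hσ : 0 ≤ sigmaMax B_LM := norm_nonneg _
  haveI : Nonempty (Fin Nt) := ⟨⟨0, hNt⟩⟩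
  constructor
  · apply ciSup_le
    intro n
    rw [hsub]
    exact norm_comp_le' (fun m => x m - w m) n
  · set r := resid A_LM B_LM b Δt f t w with hr
    -- Lipschitz bound on Fbar
    have hlipF : ‖Fbar f t w - Fbar f t x‖ ≤ L_f * ‖vec x - vec w‖ := by
      have hrw : Fbar f t w - Fbar f t x = vec (fun n => f (w n, t n) - f (x n, t n)) := rfl
      rw [hrw, hsub, ← pow_le_pow_iff_left₀ (norm_nonneg _) (by positivity) two_ne_zero,
        mul_pow, norm_vec_sq', norm_vec_sq']
      rw [Finset.mul_sum]
      apply Finset.sum_le_sum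
      intro n _
      have := hlip (w n) (x n) n
      have h2 : ‖f (w n, t n) - f (x n, t n)‖ ≤ L_f * ‖x n - w n‖ := by
        rw [norm_sub_rev (w n) (x n)] at this; exact this
      calc ‖f (w n, t n) - f (x n, t n)‖ ^ 2 ≤ (L_f * ‖x n - w n‖) ^ 2 := by
            apply pow_le_pow_left₀ (norm_nonneg _) h2
        _ = L_f ^ 2 * ‖x n - w n‖ ^ 2 := by ring
    -- residual identity
    have hrid : r = mulVecE A_LM (vec w - vec x)
        - Δt • mulVecE B_LM (Fbar f t w - Fbar f t x) := by
      have h0 : r = r - resid A_LM B_LM b Δt f t x := by rw [hx, sub_zero]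
      rw [h0, hr]
      simp only [resid, mulVecE, map_sub, smul_sub]
      abel
    have hAe : mulVecE A_LM (vec w - vec x)
        = r + Δt • mulVecE B_LM (Fbar f t w - Fbar f t x) := by
      rw [hrid]; abel
    have hB : ‖mulVecE B_LM (Fbar f t w - Fbar f t x)‖
        ≤ sigmaMax B_LM * ‖Fbar f t w - Fbar f t x‖ :=
      (LinearMap.toContinuousLinearMap (Matrix.toEuclideanLin B_LM)).le_opNorm _
    have hA := hAlow (vec w - vec x)
    rw [hAe] at hA
    have htri : ‖r + Δt • mulVecE B_LM (Fbar f t w - Fbar f t x)‖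
        ≤ ‖r‖ + Δt * ‖mulVecE B_LM (Fbar f t w - Fbar f t x)‖ := by
      calc _ ≤ ‖r‖ + ‖Δt • mulVecE B_LM (Fbar f t w - Fbar f t x)‖ := norm_add_le _ _
        _ = ‖r‖ + Δt * ‖mulVecE B_LM (Fbar f t w - Fbar f t x)‖ := by
            rw [norm_smul, Real.norm_of_nonneg hΔt.le]
    have hwx : ‖vec w - vec x‖ = ‖vec x - vec w‖ := norm_sub_rev _ _
    rw [hwx] at hA
    have hKe : (sA - Δt * L_f * sigmaMax B_LM) * ‖vec x - vec w‖ ≤ ‖r‖ := by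
      nlinarith [mul_le_mul_of_nonneg_left hB hΔt.le,
        mul_le_mul_of_nonneg_left hlipF (mul_nonneg hΔt.le hσ),
        norm_nonneg (vec x - vec w)]
    have hWr := hW w hw
    rw [← hr] at hWr
    have hK : 0 < sA - Δt * L_f * sigmaMax B_LM := by linarith
    rw [one_div, ← div_eq_inv_mul, le_div_iff₀ (by positivity)]
    nlinarith [norm_nonneg r, norm_nonneg (vec x - vec w)]
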